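/- arXiv:1803.08871 — 2 statements merged into one kernel-verified Lean document; each statement's English description precedes it below -/
import Mathlib

section
/- For any integers n ≥ 2, r ≥ 1 and δ ≥ -1 satisfying 2n ≥ 3r + 3δ - 1, one has 2^r · C(n+r+1, 2r+δ+1) > C(n+r, r+δ), where C(a,b) denotes the binomial coefficient. -/
open Finset

lemma key_id (m k : ℕ) : ∀ r : ℕ, m.choose k * ∏ i ∈ range r, (m - (k + i))
    = m.choose (k + r) * ∏ i ∈ range r, (k + i + 1) := by
  intro r
  induction r with
  | zero => simp
  | succ r ih =>
    rw [prod_range_succ, prod_range_succ, ← mul_assoc, ih]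
    have hc : m.choose (k + r + 1) * (k + r + 1) = m.choose (k + r) * (m - (k + r)) :=
      Nat.choose_succ_right_eq m (k + r)
    calc m.choose (k + r) * (∏ i ∈ range r, (k + i + 1)) * (m - (k + r))
        = (m.choose (k + r) * (m - (k + r))) * ∏ i ∈ range r, (k + i + 1) := by ring
      _ = (m.choose (k + r + 1) * (k + r + 1)) * ∏ i ∈ range r, (k + i + 1) := by rw [hc]
      _ = m.choose (k + (r + 1)) * ((∏ i ∈ range r, (k + i + 1)) * (k + r + 1)) := by
          show m.choose (k + r + 1) * (k + r + 1) * (∏ i ∈ range r, (k + i + 1))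
            = m.choose (k + r + 1) * ((∏ i ∈ range r, (k + i + 1)) * (k + r + 1))
          ring

lemma aux_le (m r k : ℕ) (h1 : ∀ i < r, k + i < m)
    (h2 : ∀ i < r, k + r - i ≤ 2 * (m - (k + i))) :
    m.choose k ≤ 2 ^ r * m.choose (k + r) := by
  have hN : 0 < ∏ i ∈ range r, (m - (k + i)) := by
    apply prod_pos
    intro i hi
    have := h1 i (mem_range.mp hi)
    omega
  have hD : (∏ i ∈ range r, (k + i + 1)) ≤ 2 ^ r * ∏ i ∈ range r, (m - (k + i)) := by
    have hre : (∏ i ∈ range r, (k + (r - 1 - i) + 1)) = ∏ i ∈ range r, (k + i + 1) :=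
      prod_range_reflect (fun i => k + i + 1) r
    rw [← hre]
    have h2r : 2 ^ r * ∏ i ∈ range r, (m - (k + i))
        = ∏ i ∈ range r, 2 * (m - (k + i)) := by
      rw [prod_mul_distrib, prod_const, card_range]
    rw [h2r]
    apply Finset.prod_le_prod'
    intro i hi
    have hi' := mem_range.mp hi
    have := h2 i hi'
    omega
  have hmain : m.choose k * (∏ i ∈ range r, (m - (k + i)))
      ≤ (2 ^ r * m.choose (k + r)) * (∏ i ∈ range r, (m - (k + i))) := by
    calc m.choose k * (∏ i ∈ range r, (m - (k + i)))
        = m.choose (k + r) * ∏ i ∈ range r, (k + i + 1) := key_id m k r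
      _ ≤ m.choose (k + r) * (2 ^ r * ∏ i ∈ range r, (m - (k + i))) :=
          Nat.mul_le_mul_left _ hD
      _ = (2 ^ r * m.choose (k + r)) * (∏ i ∈ range r, (m - (k + i))) := by ring
  exact Nat.le_of_mul_le_mul_right hmain hN

lemma nat_version (n r k : ℕ) (hn : 2 ≤ n) (hr : 1 ≤ r) (hk : 3 * k ≤ 2 * n + 1) :
    Nat.choose (n + r) k < 2 ^ r * Nat.choose (n + r + 1) (k + r + 1) := by
  have hkn : k < n := by omega
  have hle : (n + r).choose k ≤ 2 ^ r * (n + r).choose (k + r) := by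
    apply aux_le
    · intro i hi; omega
    · intro i hi; omega
  have hpos : 0 < (n + r).choose (k + r + 1) := Nat.choose_pos (by omega)
  have hpascal : (n + r + 1).choose (k + r + 1)
      = (n + r).choose (k + r) + (n + r).choose (k + r + 1) :=
    Nat.choose_succ_succ (n + r) (k + r)
  have h2r : 1 ≤ 2 ^ r := Nat.one_le_two_pow
  calc (n + r).choose k ≤ 2 ^ r * (n + r).choose (k + r) := hle
    _ < 2 ^ r * (n + r).choose (k + r) + 2 ^ r * (n + r).choose (k + r + 1) := by
        have : 1 ≤ 2 ^ r * (n + r).choose (k + r + 1) := Nat.one_le_iff_ne_zero.mpr (by positivity)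
        omega
    _ = 2 ^ r * Nat.choose (n + r + 1) (k + r + 1) := by rw [hpascal]; ring

/-- For integers n ≥ 2, r ≥ 1, δ ≥ -1 with 2n ≥ 3r + 3δ - 1,
one has 2^r · C(n+r+1, 2r+δ+1) > C(n+r, r+δ). -/
theorem stmt0 (n r : ℕ) (δ : ℤ) (hn : 2 ≤ n) (hr : 1 ≤ r) (hδ : -1 ≤ δ)
    (h : 3 * (r : ℤ) + 3 * δ - 1 ≤ 2 * (n : ℤ)) :
    (Nat.choose (n + r) ((r : ℤ) + δ).toNat : ℤ)
      < 2 ^ r * Nat.choose (n + r + 1) (2 * (r : ℤ) + δ + 1).toNat := by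
  set k : ℕ := ((r : ℤ) + δ).toNat with hkdef
  have hk : (r : ℤ) + δ = (k : ℤ) := by omega
  have htop : (2 * (r : ℤ) + δ + 1).toNat = k + r + 1 := by omega
  rw [htop]
  have h3k : 3 * k ≤ 2 * n + 1 := by omega
  have := nat_version n r k hn hr h3k
  exact_mod_cast this
end

section
/- Let R be a Noetherian local ring, h ∈ R a nonzerodivisor, b an ideal of R primary to the maximal ideal. Let T = ⊕_{k≥0} a_k/a_{k+1} with a_k = (h^k), and let in(b) ⊆ T be the ideal generated by the initial forms in(f) = [f] ∈ a_k/a_{k+1} for f ∈ b with ord_h(f) = k. Then ℓ(R/b) = ℓ(T/in(b)), i.e., the colength is preserved under passing to the initial ideal. -/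
/-!
The subspaces `b + (h^k)` decrease from `R` at `k = 0` to `b` once `h^k ∈ b`, which happens
because `h` lies in the radical of `b`. By the modular law the `k`-th step
`(b + (h^k)) / (b + (h^(k+1)))` is `(h^k) / ((h^k) ∩ b + (h^(k+1)))`, the degree-`k` part of
`T / in(b)`, so additivity of dimension along this chain gives the claim.
-/

open Submodule Module Finset

section Filtration

variable {K M : Type*} [DivisionRing K] [AddCommGroup M] [Module K M]

theorem Submodule.finiteDimensional_quotient_of_le {N P : Submodule K M} (hNP : N ≤ P)
    [FiniteDimensional K (M ⧸ N)] : FiniteDimensional K (M ⧸ P) :=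
  Module.Finite.of_surjective (factor hNP) (factor_surjective hNP)

theorem Submodule.finrank_quotient_eq_finrank_quotient_comap_add {N P : Submodule K M}
    (hNP : N ≤ P) [FiniteDimensional K (M ⧸ N)] :
    finrank K (M ⧸ N) = finrank K (P ⧸ N.comap P.subtype) + finrank K (M ⧸ P) := by
  have hker : LinearMap.ker (N.mkQ ∘ₗ P.subtype) = N.comap P.subtype := by
    rw [LinearMap.ker_comp, ker_mkQ]
  have hrange : LinearMap.range (N.mkQ ∘ₗ P.subtype) = P.map N.mkQ := by
    rw [LinearMap.range_comp, range_subtype]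
  have eSub : (P ⧸ N.comap P.subtype) ≃ₗ[K] P.map N.mkQ :=
    (quotEquivOfEq _ _ hker.symm).trans
      ((LinearMap.quotKerEquivRange _).trans (LinearEquiv.ofEq _ _ hrange))
  have eQuot : ((M ⧸ N) ⧸ P.map N.mkQ) ≃ₗ[K] M ⧸ P := quotientQuotientEquivQuotient N P hNP
  rw [eSub.finrank_eq, ← eQuot.finrank_eq, add_comm]
  exact ((P.map N.mkQ).finrank_quotient_add_finrank).symm

variable (B : Submodule K M) {F : ℕ → Submodule K M}

theorem Submodule.finrank_quotient_sup_succ [FiniteDimensional K (M ⧸ B)] {k : ℕ}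
    (hk : F (k + 1) ≤ F k) :
    finrank K (M ⧸ (B ⊔ F (k + 1))) =
      finrank K (F k ⧸ (F k ⊓ B ⊔ F (k + 1)).comap (F k).subtype) +
        finrank K (M ⧸ (B ⊔ F k)) := by
  have := finiteDimensional_quotient_of_le (le_sup_left : B ≤ B ⊔ F (k + 1))
  have hsup : F k ⊔ (B ⊔ F (k + 1)) = B ⊔ F k := by
    rw [sup_left_comm, sup_eq_left.2 hk]
  have hinf : (F k ⊓ B ⊔ F (k + 1)).comap (F k).subtype =
      (F k).comap (F k).subtype ⊓ (B ⊔ F (k + 1)).comap (F k).subtype := by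
    rw [inf_sup_assoc_of_le _ hk, comap_inf]
  rw [finrank_quotient_eq_finrank_quotient_comap_add (le_sup_right : _ ≤ F k ⊔ (B ⊔ F (k + 1))),
    hinf, (LinearMap.quotientInfEquivSupQuotient _ _).finrank_eq, hsup]

variable [FiniteDimensional K (M ⧸ B)]

theorem Submodule.sum_range_finrank_gradedPiece (hF : Antitone F) (hF0 : F 0 = ⊤) (n : ℕ) :
    ∑ k ∈ range n, finrank K (F k ⧸ (F k ⊓ B ⊔ F (k + 1)).comap (F k).subtype) =
      finrank K (M ⧸ (B ⊔ F n)) := by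
  induction n with
  | zero =>
    rw [sum_range_zero, hF0, sup_top_eq]
    have : Subsingleton (M ⧸ (⊤ : Submodule K M)) := Quotient.subsingleton_iff.2 rfl
    exact finrank_zero_of_subsingleton.symm
  | succ n ih =>
    rw [sum_range_succ, ih, finrank_quotient_sup_succ B (hF n.le_succ), add_comm]

theorem Submodule.finrank_quotient_eq_finsum_finrank_gradedPiece (hF : Antitone F)
    (hF0 : F 0 = ⊤) {N : ℕ} (hN : F N ≤ B) :
    finrank K (M ⧸ B) =
      ∑ᶠ k, finrank K (F k ⧸ (F k ⊓ B ⊔ F (k + 1)).comap (F k).subtype) := by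
  have hsupp : (Function.support fun k ↦
      finrank K (F k ⧸ (F k ⊓ B ⊔ F (k + 1)).comap (F k).subtype)) ⊆ range N := by
    intro k hk
    by_contra hkN
    have hFk : F k ≤ B := (hF (by simpa using hkN)).trans hN
    have htop : (F k ⊓ B ⊔ F (k + 1)).comap (F k).subtype = ⊤ := by
      rw [inf_eq_left.2 hFk, comap_subtype_eq_top.2 le_sup_left]
    have := Quotient.subsingleton_iff.2 htop
    exact hk finrank_zero_of_subsingleton
  rw [finsum_eq_finsetSum_of_support_subset _ hsupp, sum_range_finrank_gradedPiece B hF hF0,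
    sup_eq_left.2 hN]

end Filtration

theorem stmt9_general (R : Type) [CommRing R] [Algebra ℂ R] [IsLocalRing R]
    (h : R) (hm : h ∈ IsLocalRing.maximalIdeal R)
    (b : Ideal R) (hb : b.radical = IsLocalRing.maximalIdeal R)
    [FiniteDimensional ℂ (R ⧸ b)] :
    Module.finrank ℂ (R ⧸ b) =
      ∑ᶠ k : ℕ, Module.finrank ℂ
        ((Submodule.restrictScalars ℂ ((Ideal.span {h ^ k} : Ideal R) : Submodule R R)) ⧸
          Submodule.comap
            (Submodule.restrictScalars ℂ ((Ideal.span {h ^ k} : Ideal R) : Submodule R R)).subtype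
            (Submodule.restrictScalars ℂ
              (((Ideal.span {h ^ k} ⊓ b ⊔ Ideal.span {h ^ (k + 1)}) : Ideal R) : Submodule R R))) := by
  obtain ⟨N, hN⟩ : h ∈ b.radical := hb ▸ hm
  have e := Quotient.restrictScalarsEquiv ℂ (b : Submodule R R)
  have := Module.Finite.equiv e.symm
  have hanti : Antitone fun k ↦ (Ideal.span {h ^ k}).restrictScalars ℂ := fun k l hkl ↦
    restrictScalars_mono ℂ (Ideal.span_singleton_le_span_singleton.2 (pow_dvd_pow h hkl))
  have hNb : (Ideal.span {h ^ N}).restrictScalars ℂ ≤ b.restrictScalars ℂ :=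
    restrictScalars_mono ℂ ((Ideal.span_singleton_le_iff_mem b).2 hN)
  rw [← e.finrank_eq, finrank_quotient_eq_finsum_finrank_gradedPiece _ hanti (by simp) hNb]
  refine finsum_congr fun k ↦ ?_
  rw [restrictScalars_sup, restrictScalars_inf]

/-- Lemma 4.1: for a Noetherian local ℂ-algebra R, a nonzerodivisor h in the
maximal ideal and an ideal b primary to the maximal ideal, the colength of b
equals the colength of its initial ideal in T = ⊕_{k≥0} (h^k)/(h^{k+1}), i.e.
ℓ(R/b) = ∑_k ℓ((h^k)/((h^k)∩b + (h^{k+1}))). Lengths are ℂ-dimensions. -/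
theorem stmt9 (R : Type) [CommRing R] [Algebra ℂ R] [IsNoetherianRing R] [IsLocalRing R]
    (h : R) (hh : h ∈ nonZeroDivisors R) (hm : h ∈ IsLocalRing.maximalIdeal R)
    (b : Ideal R) (hb : b.radical = IsLocalRing.maximalIdeal R)
    [FiniteDimensional ℂ (R ⧸ b)] :
    Module.finrank ℂ (R ⧸ b) =
      ∑ᶠ k : ℕ, Module.finrank ℂ
        ((Submodule.restrictScalars ℂ ((Ideal.span {h ^ k} : Ideal R) : Submodule R R)) ⧸
          Submodule.comap
            (Submodule.restrictScalars ℂ ((Ideal.span {h ^ k} : Ideal R) : Submodule R R)).subtype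
            (Submodule.restrictScalars ℂ
              (((Ideal.span {h ^ k} ⊓ b ⊔ Ideal.span {h ^ (k + 1)}) : Ideal R) : Submodule R R))) :=
  stmt9_general R h hm b hb
end
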